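/- arXiv:2308.02276 — 3 statements merged into one kernel-verified Lean document; each statement's English description precedes it below -/
import Mathlib

section
/- Let p > 1, c₁ > 0, and v ≥ 0. Define f̃(y) = -v·|y|^p for y ≥ -c₁ and f̃(y) = v·c₁^(p-1)·(p·y + (p-1)·c₁) for y < -c₁ (the linearization of -v|y|^p below -c₁). Then f̃ is monotone: for all y, y' ∈ ℝ, (y - y')·(f̃(y) - f̃(y')) ≤ p·v·c₁^(p-1)·(y - y')². -/
/-!
Put `L = p v c₁^(p-1)`. The inequality amounts to monotonicity of `y ↦ L y - f̃ y`. Below `-c₁`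
this function is constant, since `f̃` is a line of slope `L` there. On `[-c₁, ∞)` the
slopes of `-v |y|^p` are at most `L`: where `|y|` decreases, convexity of `x ↦ x^p` bounds the
decrease of `|y|^p` by `p |y|^(p-1) ≤ p c₁^(p-1)` times the decrease of `|y|`.
-/

open Set

lemma rpow_sub_rpow_le_mul_rpow_sub_one {p a b : ℝ} (hp : 1 ≤ p) (hb : 0 ≤ b) (hba : b ≤ a) :
    a ^ p - b ^ p ≤ p * a ^ (p - 1) * (a - b) := by
  rcases hba.eq_or_lt with rfl | hlt
  · simp
  have hslope := (convexOn_rpow hp).slope_le_of_hasDerivAt hb (hb.trans hlt.le) hlt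
    (Real.hasDerivAt_rpow_const (Or.inr hp))
  rwa [slope_def_field, div_le_iff₀ (sub_pos.2 hlt)] at hslope

lemma abs_rpow_sub_abs_rpow_le {p c y y' : ℝ} (hp : 1 ≤ p) (hc : 0 ≤ c) (hy : -c ≤ y)
    (hyy' : y ≤ y') : |y| ^ p - |y'| ^ p ≤ p * c ^ (p - 1) * (y' - y) := by
  have hrhs : 0 ≤ p * c ^ (p - 1) * (y' - y) := by
    have := Real.rpow_nonneg hc (p - 1)
    have := sub_nonneg.2 hyy'
    positivity
  rcases le_or_gt |y| |y'| with hle | hlt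
  · have := Real.rpow_le_rpow (abs_nonneg y) hle (by linarith : 0 ≤ p)
    linarith
  have hy_neg : y < 0 := by
    by_contra! hy0
    rw [abs_of_nonneg hy0, abs_of_nonneg (hy0.trans hyy')] at hlt
    linarith
  have hyc : |y| ≤ c := by rw [abs_of_neg hy_neg]; linarith
  have hdecr : |y| - |y'| ≤ y' - y := by rw [abs_of_neg hy_neg]; linarith [neg_le_abs y']
  calc |y| ^ p - |y'| ^ p ≤ p * |y| ^ (p - 1) * (|y| - |y'|) :=
        rpow_sub_rpow_le_mul_rpow_sub_one hp (abs_nonneg y') hlt.le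
    _ ≤ p * c ^ (p - 1) * (y' - y) := by
        have := Real.rpow_le_rpow (abs_nonneg y) hyc (by linarith : 0 ≤ p - 1)
        gcongr

lemma mul_sub_le_of_monotone_mul_sub {L : ℝ} {f : ℝ → ℝ} (hg : Monotone fun y => L * y - f y)
    (y y' : ℝ) : (y - y') * (f y - f y') ≤ L * (y - y') ^ 2 := by
  have : 0 ≤ (y - y') * ((L * y - f y) - (L * y' - f y')) := by
    rcases le_total y y' with h | h
    · exact mul_nonneg_of_nonpos_of_nonpos (sub_nonpos.2 h) (sub_nonpos.2 (hg h))
    · exact mul_nonneg (sub_nonneg.2 h) (sub_nonneg.2 (hg h))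
  linarith

theorem stmt_3
    (p c₁ v : ℝ) (hp : 1 < p) (hc : 0 < c₁) (hv : 0 ≤ v)
    (f : ℝ → ℝ)
    (hf : ∀ y : ℝ, f y =
      if -c₁ ≤ y then -v * |y| ^ p
      else v * c₁ ^ (p - 1) * (p * y + (p - 1) * c₁)) :
    ∀ y y' : ℝ, (y - y') * (f y - f y') ≤ p * v * c₁ ^ (p - 1) * (y - y') ^ 2 := by
  have f_of_le : ∀ y ≤ -c₁, f y = v * c₁ ^ (p - 1) * (p * y + (p - 1) * c₁) := by
    intro y hy
    rw [hf, ite_eq_right_iff]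
    intro hy'
    obtain rfl : y = -c₁ := le_antisymm hy hy'
    rw [abs_neg, abs_of_pos hc, Real.rpow_sub_one hc.ne']
    field_simp
    ring
  refine mul_sub_le_of_monotone_mul_sub (MonotoneOn.Iic_union_Ici (a := -c₁) ?_ ?_)
  · intro y hy y' hy' _
    simp only [f_of_le y hy, f_of_le y' hy']
    linarith
  · intro y hy y' hy' hyy'
    simp only [hf, if_pos (mem_Ici.1 hy), if_pos (mem_Ici.1 hy')]
    have := mul_le_mul_of_nonneg_left (abs_rpow_sub_abs_rpow_le hp.le hc.le hy hyy') hv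
    linarith
end

section
/- Let T > 0, vol : [0,T] → (0,∞) continuous, and let Y : [0,T] → ℝ be a differentiable solution of Y'(t) = vol(t)·Y(t)² with Y(T) = ξ for some ξ ∈ ℝ. Let Q*(t) = Q₀·exp(-∫₀ᵗ Y(s)·vol(s) ds). Then the function t ↦ Y(t)·Q*(t)² satisfies d/dt(Y(t)Q*(t)²) = -vol(t)·(Y(t)·Q*(t))² = -(Q*'(t))²/vol(t), and consequently Y(0)·Q₀² = ∫₀ᵀ (Q*'(s))²/vol(s) ds + ξ·Q*(T)². -/
/-! Along the optimal trajectory `Q' = -Y vol Q`, the Riccati equation `Y' = vol Y²` makes the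
derivative of `Y Q²` collapse to `vol Y² Q² - 2 vol Y² Q² = -vol (Y Q)² = -(Q')² / vol`.
Integrating this over `[0, T]` gives the identity. -/

open MeasureTheory Set intervalIntegral

theorem hasDerivAt_const_mul_exp_neg_integral {g : ℝ → ℝ} (hg : Continuous g) (c a t : ℝ) :
    HasDerivAt (fun u => c * Real.exp (-∫ s in a..u, g s))
      (-(g t) * (c * Real.exp (-∫ s in a..t, g s))) t := by
  have hint : HasDerivAt (fun u => ∫ s in a..u, g s) (g t) t :=
    integral_hasDerivAt_right (hg.intervalIntegrable _ _) (hg.stronglyMeasurableAtFilter _ _)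
      hg.continuousAt
  refine ((hint.neg.exp).const_mul c).congr_deriv ?_
  simp only [Pi.neg_apply]
  ring

theorem HasDerivAt.mul_sq_of_riccati {Y Q : ℝ → ℝ} {v t : ℝ}
    (hY : HasDerivAt Y (v * Y t ^ 2) t) (hQ : HasDerivAt Q (-(Y t * v) * Q t) t) :
    HasDerivAt (fun u => Y u * Q u ^ 2) (-v * (Y t * Q t) ^ 2) t := by
  refine (hY.mul (hQ.pow 2)).congr_deriv ?_
  simp only [Pi.pow_apply]
  ring

theorem stmt_12
    (T ξ Q₀ : ℝ) (hT : 0 < T)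
    (vol : ℝ → ℝ) (hvol_cont : Continuous vol)
    (hvol_pos : ∀ t ∈ Icc (0:ℝ) T, 0 < vol t)
    (Y : ℝ → ℝ)
    (hY : ∀ t, HasDerivAt Y (vol t * (Y t) ^ 2) t)
    (hYT : Y T = ξ)
    (Qstar : ℝ → ℝ)
    (hQstar : ∀ t, Qstar t = Q₀ * Real.exp (-∫ s in (0:ℝ)..t, Y s * vol s)) :
    (∀ t ∈ Icc (0:ℝ) T,
      HasDerivAt (fun u => Y u * (Qstar u) ^ 2)
        (-(vol t) * (Y t * Qstar t) ^ 2) t) ∧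
    Y 0 * Q₀ ^ 2 =
      (∫ s in (0:ℝ)..T, (-(Y s * vol s * Qstar s)) ^ 2 / vol s) +
        ξ * (Qstar T) ^ 2 := by
  have hY_cont : Continuous Y := Differentiable.continuous fun t => (hY t).differentiableAt
  have hQ : ∀ t, HasDerivAt Qstar (-(Y t * vol t) * Qstar t) t := by
    intro t
    rw [funext hQstar]
    exact hasDerivAt_const_mul_exp_neg_integral (hY_cont.mul hvol_cont) Q₀ 0 t
  have hQ_cont : Continuous Qstar := Differentiable.continuous fun t => (hQ t).differentiableAt
  have hF t := (hY t).mul_sq_of_riccati (hQ t)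
  refine ⟨fun t _ => hF t, ?_⟩
  have hFTC := integral_eq_sub_of_hasDerivAt (fun t _ => hF t)
    ((hvol_cont.neg.mul ((hY_cont.mul hQ_cont).pow 2)).intervalIntegrable 0 T)
  have hQ0 : Qstar 0 = Q₀ := by simp [hQstar]
  have h_integrand : (∫ s in (0:ℝ)..T, (-(Y s * vol s * Qstar s)) ^ 2 / vol s)
      = -∫ s in (0:ℝ)..T, -vol s * (Y s * Qstar s) ^ 2 := by
    rw [← intervalIntegral.integral_neg]
    refine integral_congr fun s hs => ?_
    have hv : vol s ≠ 0 := (hvol_pos s (uIcc_of_le hT.le ▸ hs)).ne'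
    field_simp
  rw [h_integrand, hFTC, hYT, hQ0]
  ring
end

section
/- Let p̂ = p = 2, T > 0, K > 0 and vol : [0,T] → [0, V̄] measurable with K·T·V̄ < 1. Let Y : [0,T] → ℝ be any continuous function satisfying the integral equation Y(t) = Y(r) + ∫ₜʳ vol(s)·|Y(s)|² ds for all 0 ≤ t ≤ r ≤ T together with Y(T) ≥ -K. Then Y(t) ≥ z(t) for all t ∈ [0,T], where z(t) = -(1/K - V̄·(T-t))⁻¹. -/
/-! The integrand `vol |Y|²` is nonnegative, so `Y` is nonincreasing and `Y t ≥ Y T ≥ -K`,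
while the barrier `z` increases to `z T = -K` and hence stays below `-K` on `[0, T]`. -/

open MeasureTheory Set intervalIntegral

theorem le_of_eq_add_intervalIntegral_of_nonneg {Y f : ℝ → ℝ} {t r : ℝ} (htr : t ≤ r)
    (hY : Y t = Y r + ∫ s in t..r, f s) (hf : ∀ s ∈ Icc t r, 0 ≤ f s) : Y r ≤ Y t := by
  rw [hY]
  exact le_add_of_nonneg_right (integral_nonneg htr hf)

theorem neg_inv_one_div_sub_mul_le_neg {K V s : ℝ} (hK : 0 < K) (hV : 0 ≤ V) (hs : 0 ≤ s)
    (hbal : K * s * V < 1) : -(1 / K - V * s)⁻¹ ≤ -K := by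
  have hVs : V * s < 1 / K := by
    rw [lt_div_iff₀ hK]
    linarith
  have hden_pos : 0 < 1 / K - V * s := by linarith
  have hden_le : 1 / K - V * s ≤ K⁻¹ := by
    rw [← one_div]
    linarith [mul_nonneg hV hs]
  exact neg_le_neg ((le_inv_comm₀ hK hden_pos).2 hden_le)

theorem stmt_17_general
    (T K Vbar : ℝ) (hK : 0 < K) (hV : 0 < Vbar)
    (hbal : K * T * Vbar < 1)
    (vol : ℝ → ℝ)
    (hvol_nonneg : ∀ t ∈ Icc (0:ℝ) T, 0 ≤ vol t)
    (Y : ℝ → ℝ)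
    (hY_eq : ∀ t r : ℝ, 0 ≤ t → t ≤ r → r ≤ T →
      Y t = Y r + ∫ s in t..r, vol s * |Y s| ^ 2)
    (hYT : -K ≤ Y T)
    (z : ℝ → ℝ) (hz : ∀ t, z t = -(1 / K - Vbar * (T - t))⁻¹) :
    ∀ t ∈ Icc (0:ℝ) T, z t ≤ Y t := by
  rintro t ⟨ht0, htT⟩
  have hzK : z t ≤ -K := by
    rw [hz]
    refine neg_inv_one_div_sub_mul_le_neg hK hV.le (sub_nonneg.2 htT) ?_
    nlinarith [mul_nonneg (mul_nonneg hK.le hV.le) ht0]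
  have hYt : Y T ≤ Y t :=
    le_of_eq_add_intervalIntegral_of_nonneg htT (hY_eq t T ht0 htT le_rfl) fun s hs =>
      mul_nonneg (hvol_nonneg s ⟨ht0.trans hs.1, hs.2⟩) (sq_nonneg _)
  linarith

theorem stmt_17
    (T K Vbar : ℝ) (hT : 0 < T) (hK : 0 < K) (hV : 0 < Vbar)
    (hbal : K * T * Vbar < 1)
    (vol : ℝ → ℝ) (hvol_meas : Measurable vol)
    (hvol_nonneg : ∀ t ∈ Icc (0:ℝ) T, 0 ≤ vol t)
    (hvol_bdd : ∀ t ∈ Icc (0:ℝ) T, vol t ≤ Vbar)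
    (Y : ℝ → ℝ) (hY_cont : ContinuousOn Y (Icc 0 T))
    (hY_eq : ∀ t r : ℝ, 0 ≤ t → t ≤ r → r ≤ T →
      Y t = Y r + ∫ s in t..r, vol s * |Y s| ^ 2)
    (hYT : -K ≤ Y T)
    (z : ℝ → ℝ) (hz : ∀ t, z t = -(1 / K - Vbar * (T - t))⁻¹) :
    ∀ t ∈ Icc (0:ℝ) T, z t ≤ Y t :=
  stmt_17_general T K Vbar hK hV hbal vol hvol_nonneg Y hY_eq hYT z hz
end
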